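/- Let G be the trivalent Le-graph of the totally positive Schubert cell of shape λ and let M be a marking of G. Suppose that for some row i and r ≥ 1, Γ^i_1, …, Γ^i_r are consecutive white vertices of row i (listed left to right), all marked; that the white vertex Γ^i_0 of row i immediately preceding Γ^i_1 is not marked; and that either Γ^i_r is the last white vertex of row i, or the white vertex Γ^i_{r+1} immediately following Γ^i_r is not marked. If none of Γ^i_1, …, Γ^i_r is directly connected to the boundary, then: (a) the white vertex Γ^{i+1}_1 exists and is not marked; (b) the white vertices Γ^{i+1}_2, …, Γ^{i+1}_r exist and are all marked; (c) if the white vertex Γ^{i+1}_{r+1} immediately following Γ^{i+1}_r in row i+1 exists, it is not marked. -/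
import Mathlib


/-!
A concrete combinatorial model of the trivalent Le-graph `G` of the totally positive
Schubert cell of shape `μ` (a nonempty Young diagram, rows and columns indexed from `0`).

In the fully filled Le-tableau every box `(i,j)` of `μ` carries an internal vertex of the
Le-network; after removing the (unique) bivalent vertex at the box `(0,0)` and splitting
every four-valent vertex into an adjacent white/black pair of trivalent vertices, the box
`(i,j)` contributes a white vertex `white i j` when `j ≥ 1` and a black vertex `black i j`
when `i ≥ 1`.  Each remaining trivalent vertex is white iff it has exactly one incoming
edge, and black iff it has exactly one outgoing edge (horizontal edges are oriented
right-to-left, vertical edges downward).  `bsource i` is the boundary vertex attached to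
the right end of row `i` and `bsink j` the boundary vertex attached to the bottom of
column `j`.
-/

namespace LeGraph

/-- Vertices of the trivalent Le-graph (internal and boundary). -/
inductive V : Type
  | white (i j : ℕ)
  | black (i j : ℕ)
  | bsource (i : ℕ)
  | bsink (j : ℕ)
deriving DecidableEq

/-- Internal vertices. -/
def V.isInternal : V → Prop
  | white _ _ => True
  | black _ _ => True
  | _ => False

/-- Boundary vertices. -/
def V.isBoundary : V → Prop
  | bsource _ => True
  | bsink _ => True
  | _ => False

/-- White vertices. -/
def V.isWhite : V → Prop
  | white _ _ => True
  | _ => False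

/-- Black vertices. -/
def V.isBlack : V → Prop
  | black _ _ => True
  | _ => False

/-- The row of the Young diagram an internal vertex lies in (junk value for sinks). -/
def V.row : V → ℕ
  | white i _ => i
  | black i _ => i
  | bsource i => i
  | bsink _ => 0

variable (μ : YoungDiagram)

/-- The vertices actually occurring in the Le-graph of shape `μ`. -/
def Valid : V → Prop
  | .white i j => (i, j) ∈ μ ∧ 1 ≤ j
  | .black i j => (i, j) ∈ μ ∧ 1 ≤ i
  | .bsource i => (i, 0) ∈ μ
  | .bsink j => (0, j) ∈ μ

/-- The (oriented, listed once) edges of the Le-graph of shape `μ`: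
* `link`: the new edge joining the white/black pair obtained by splitting the four-valent
  vertex of the box `(i,j)`, `i,j ≥ 1`;
* `horiz`: the horizontal edge joining the boxes `(i,j)` and `(i,j+1)` of row `i ≥ 1`;
* `horizTop`: the horizontal edge joining the boxes `(0,j)` and `(0,j+1)` of the top row;
* `mergedEdge`: the edge through the removed bivalent vertex of the box `(0,0)`;
* `vert`/`vertLeft`: the vertical edge joining the boxes `(i,j)` and `(i+1,j)`;
* `sourceEdge`/`sourceTop`/`sourceMerged`: the edge joining the rightmost box of a row to
  its boundary source vertex;
* `sinkEdge`/`sinkLeft`/`sinkMerged`: the edge joining the lowest box of a column to its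
  boundary sink vertex;
* `singleBox`: the degenerate case where `μ` consists of the single box `(0,0)`. -/
inductive AdjAux : V → V → Prop
  | link {i j : ℕ} (h : (i, j) ∈ μ) (hi : 1 ≤ i) (hj : 1 ≤ j) :
      AdjAux (.white i j) (.black i j)
  | horiz {i j : ℕ} (h : (i, j + 1) ∈ μ) (hi : 1 ≤ i) :
      AdjAux (.black i j) (.white i (j + 1))
  | horizTop {j : ℕ} (h : (0, j + 1) ∈ μ) (hj : 1 ≤ j) :
      AdjAux (.white 0 j) (.white 0 (j + 1))
  | mergedEdge (h0 : (0, 1) ∈ μ) (h1 : (1, 0) ∈ μ) :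
      AdjAux (.white 0 1) (.black 1 0)
  | vert {i j : ℕ} (h : (i + 1, j) ∈ μ) (hj : 1 ≤ j) :
      AdjAux (.white i j) (.black (i + 1) j)
  | vertLeft {i : ℕ} (h : (i + 1, 0) ∈ μ) (hi : 1 ≤ i) :
      AdjAux (.black i 0) (.black (i + 1) 0)
  | sourceEdge {i j : ℕ} (h : (i, j) ∈ μ) (h' : (i, j + 1) ∉ μ) (hi : 1 ≤ i) :
      AdjAux (.black i j) (.bsource i)
  | sourceTop {j : ℕ} (h : (0, j) ∈ μ) (h' : (0, j + 1) ∉ μ) (hj : 1 ≤ j) :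
      AdjAux (.white 0 j) (.bsource 0)
  | sourceMerged (h : (0, 1) ∉ μ) (h1 : (1, 0) ∈ μ) :
      AdjAux (.black 1 0) (.bsource 0)
  | sinkEdge {i j : ℕ} (h : (i, j) ∈ μ) (h' : (i + 1, j) ∉ μ) (hj : 1 ≤ j) :
      AdjAux (.white i j) (.bsink j)
  | sinkLeft {i : ℕ} (h : (i, 0) ∈ μ) (h' : (i + 1, 0) ∉ μ) (hi : 1 ≤ i) :
      AdjAux (.black i 0) (.bsink 0)
  | sinkMerged (h : (1, 0) ∉ μ) (h0 : (0, 1) ∈ μ) :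
      AdjAux (.white 0 1) (.bsink 0)
  | singleBox (h : (0, 0) ∈ μ) (h1 : (0, 1) ∉ μ) (h2 : (1, 0) ∉ μ) :
      AdjAux (.bsource 0) (.bsink 0)

/-- Two vertices are directly connected iff they are joined by an edge of `G`. -/
def Adj (u v : V) : Prop := AdjAux μ u v ∨ AdjAux μ v u

/-- An internal vertex is directly connected to the boundary iff it is joined by an edge
of `G` to a boundary vertex. -/
def ConnectedToBoundary (v : V) : Prop := ∃ b : V, b.isBoundary ∧ Adj μ v b

/-- A marking of the Le-graph of shape `μ`: a set `M` of (valid) internal vertices such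
that (i) every black vertex directly connected to a white vertex of `M` belongs to `M`;
(ii) every white vertex directly connected to at least two vertices of `M` belongs to `M`;
(iii) no white vertex of the top row, and no white vertex that is leftmost among the white
vertices of its row (i.e. in column `1`), belongs to `M`. -/
structure IsMarking (M : Set V) : Prop where
  internal : ∀ v ∈ M, v.isInternal ∧ Valid μ v
  black_mem : ∀ w ∈ M, w.isWhite → ∀ b : V, b.isBlack → Valid μ b → Adj μ b w → b ∈ M
  white_mem : ∀ w : V, w.isWhite → Valid μ w →
      (∃ u ∈ M, ∃ v ∈ M, u ≠ v ∧ Adj μ w u ∧ Adj μ w v) → w ∈ M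
  top_row : ∀ j : ℕ, V.white 0 j ∉ M
  leftmost : ∀ i : ℕ, V.white i 1 ∉ M

/-- Adjacency within a set `M` of vertices (for the subgraph of `G` induced by `M`). -/
def AdjIn (M : Set V) (u v : V) : Prop := u ∈ M ∧ v ∈ M ∧ Adj μ u v

/-- `C` is a connected component of the subgraph of `G` induced by `M`:
`C ⊆ M`, any two vertices of `C` are joined by a path inside `M`, and `C` is closed under
adjacency inside `M`. -/
def IsConnComp (M C : Set V) : Prop :=
  C ⊆ M ∧ (∀ u ∈ C, ∀ v ∈ C, Relation.ReflTransGen (AdjIn μ M) u v) ∧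
    ∀ u ∈ C, ∀ v : V, AdjIn μ M u v → v ∈ C

/-- The faces of the Le-graph of shape `μ`:
* `box i j` (for `(i,j) ∈ μ`, `i,j ≥ 1`): the internal face whose bottom-right corner box
  is `(i,j)` (bounded by the wires of rows `i-1`, `i` and columns `j-1`, `j`);
* `corner i`: the face between the source edge of row `i` and the next boundary edge;
* `col j` (for `j ≥ 1`): the face between the sink edge of column `j` and the next
  boundary edge;
* `outer`: the unbounded face (whose boundary contains the top row and leftmost column). -/
inductive Face : Type
  | box (i j : ℕ)
  | corner (i : ℕ)
  | col (j : ℕ)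
  | outer
deriving DecidableEq

/-- The faces actually occurring in the Le-graph of shape `μ`. -/
def FaceValid : Face → Prop
  | .box i j => (i, j) ∈ μ ∧ 1 ≤ i ∧ 1 ≤ j
  | .corner i => (i, 0) ∈ μ
  | .col j => (0, j) ∈ μ ∧ 1 ≤ j
  | .outer => True

open Classical in
/-- The set of internal vertices lying on the boundary of a face. -/
noncomputable def FaceBdry : Face → Set V
  | .box i j =>
      {v | Valid μ v ∧ (v = .white (i - 1) (j - 1) ∨ v = .black (i - 1) (j - 1) ∨
        v = .white (i - 1) j ∨ v = .black i (j - 1) ∨ v = .white i j ∨ v = .black i j)}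
  | .corner i =>
      if (i + 1, μ.rowLen i - 1) ∈ μ then
        {v | Valid μ v ∧ (v = .black i (μ.rowLen i - 1) ∨ v = .white i (μ.rowLen i - 1) ∨
          v = .black (i + 1) (μ.rowLen i - 1))}
      else
        {v | Valid μ v ∧ (v = .white i (μ.rowLen i - 1) ∨ v = .black i (μ.rowLen i - 1))}
  | .col j =>
      if (μ.colLen j, j - 1) ∈ μ then
        {v | Valid μ v ∧ (v = .white (μ.colLen j - 1) j ∨ v = .black (μ.colLen j - 1) (j - 1) ∨
          v = .white (μ.colLen j - 1) (j - 1) ∨ v = .black (μ.colLen j) (j - 1))}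
      else
        {v | Valid μ v ∧ (v = .white (μ.colLen j - 1) j ∨ v = .black (μ.colLen j - 1) (j - 1) ∨
          v = .white (μ.colLen j - 1) (j - 1))}
  | .outer => {v | Valid μ v ∧ ((∃ j, v = .white 0 j) ∨ (∃ i, v = .black i 0))}

/-- A face is internal to a set `S` of internal vertices iff every internal vertex on its
boundary belongs to `S`. -/
def FaceInternalTo (S : Set V) (f : Face) : Prop := ∀ v ∈ FaceBdry μ f, v ∈ S

/-- A face lies between rows `i` and `i+1` iff all internal vertices on its boundary
belong to rows `i` and `i+1`. -/
def FaceBetween (i : ℕ) (f : Face) : Prop := ∀ v ∈ FaceBdry μ f, v.row = i ∨ v.row = i + 1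


/-- Lemma 4, case 1: let `Γ^i_j = white i (c+j-1)`, `1 ≤ j ≤ r`, be
consecutive marked white vertices of row `i`, with the preceding white vertex
`Γ^i_0 = white i (c-1)` unmarked, and with either `Γ^i_r` the last white vertex of row `i`
or the following white vertex `Γ^i_{r+1} = white i (c+r)` unmarked.  If none of
`Γ^i_1, …, Γ^i_r` is directly connected to the boundary, then (a) `Γ^{i+1}_1 = white (i+1) c`
exists and is not marked; (b) `Γ^{i+1}_j = white (i+1) (c+j-1)`, `2 ≤ j ≤ r`, exist and are
marked; (c) if `Γ^{i+1}_{r+1} = white (i+1) (c+r)` exists, it is not marked. -/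
theorem marked_block_no_boundary (μ : YoungDiagram) (hμ : μ.cells.Nonempty)
    (M : Set V) (hM : IsMarking μ M) (i c r : ℕ) (hr : 1 ≤ r) (hc : 2 ≤ c)
    (hval : ∀ j, 1 ≤ j → j ≤ r → Valid μ (V.white i (c + j - 1)))
    (hmark : ∀ j, 1 ≤ j → j ≤ r → V.white i (c + j - 1) ∈ M)
    (h0val : Valid μ (V.white i (c - 1)))
    (h0 : V.white i (c - 1) ∉ M)
    (hnext : (i, c + r) ∉ μ ∨ V.white i (c + r) ∉ M)
    (hbd : ∀ j, 1 ≤ j → j ≤ r → ¬ ConnectedToBoundary μ (V.white i (c + j - 1))) :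
    (Valid μ (V.white (i + 1) c) ∧ V.white (i + 1) c ∉ M) ∧
    (∀ j, 2 ≤ j → j ≤ r →
      Valid μ (V.white (i + 1) (c + j - 1)) ∧ V.white (i + 1) (c + j - 1) ∈ M) ∧
    ((i + 1, c + r) ∈ μ → V.white (i + 1) (c + r) ∉ M) := by

  classical
  -- `i ≥ 1` since a white vertex of the top row cannot be marked
  have hi : 1 ≤ i := by
    rcases Nat.eq_zero_or_pos i with h | h
    · exact absurd (hmark 1 le_rfl hr) (by rw [h]; exact hM.top_row _)
    · exact h
  -- restate block hypotheses in terms of the column index k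
  have hmemμ' : ∀ k, c ≤ k → k ≤ c + r - 1 → (i, k) ∈ μ := by
    intro k h1 h2
    have := (hval (k - c + 1) (by omega) (by omega)).1
    have e : c + (k - c + 1) - 1 = k := by omega
    rwa [e] at this
  have hmark' : ∀ k, c ≤ k → k ≤ c + r - 1 → V.white i k ∈ M := by
    intro k h1 h2
    have := hmark (k - c + 1) (by omega) (by omega)
    have e : c + (k - c + 1) - 1 = k := by omega
    rwa [e] at this
  have hbd' : ∀ k, c ≤ k → k ≤ c + r - 1 → ¬ ConnectedToBoundary μ (V.white i k) := by
    intro k h1 h2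
    have := hbd (k - c + 1) (by omega) (by omega)
    have e : c + (k - c + 1) - 1 = k := by omega
    rwa [e] at this
  -- no boundary connection forces the box below to be in μ
  have hdown' : ∀ k, c ≤ k → k ≤ c + r - 1 → (i + 1, k) ∈ μ := by
    intro k h1 h2
    by_contra h
    exact hbd' k h1 h2 ⟨V.bsink k, trivial,
      Or.inl (AdjAux.sinkEdge (hmemμ' k h1 h2) h (by omega))⟩
  -- marked whites push into their black neighbors
  have hblk_link : ∀ k, c ≤ k → k ≤ c + r - 1 → V.black i k ∈ M := by
    intro k h1 h2
    exact hM.black_mem _ (hmark' k h1 h2) trivial _ trivial ⟨hmemμ' k h1 h2, hi⟩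
      (Or.inr (AdjAux.link (hmemμ' k h1 h2) hi (by omega)))
  have hblk_vert : ∀ k, c ≤ k → k ≤ c + r - 1 → V.black (i + 1) k ∈ M := by
    intro k h1 h2
    exact hM.black_mem _ (hmark' k h1 h2) trivial _ trivial
      ⟨hdown' k h1 h2, by omega⟩
      (Or.inr (AdjAux.vert (hdown' k h1 h2) (by omega)))
  refine ⟨⟨⟨hdown' c le_rfl (by omega), by omega⟩, ?_⟩, ?_, ?_⟩
  · -- (a) white (i+1) c is not marked
    intro hcontra
    -- black (i+1) (c-1) ∈ M
    have hcm1 : (i + 1, c - 1) ∈ μ :=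
      μ.up_left_mem le_rfl (by omega) (hdown' c le_rfl (by omega))
    have hb1 : V.black (i + 1) (c - 1) ∈ M := by
      refine hM.black_mem _ hcontra trivial _ trivial ⟨hcm1, by omega⟩ (Or.inl ?_)
      have := AdjAux.horiz (μ := μ) (i := i + 1) (j := c - 1)
        (by rw [show c - 1 + 1 = c from by omega]; exact hdown' c le_rfl (by omega))
        (by omega)
      rwa [show c - 1 + 1 = c from by omega] at this
    -- black i (c-1) ∈ M
    have hb2 : V.black i (c - 1) ∈ M := by
      refine hM.black_mem _ (hmark' c le_rfl (by omega)) trivial _ trivial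
        ⟨h0val.1, hi⟩ (Or.inl ?_)
      have := AdjAux.horiz (μ := μ) (i := i) (j := c - 1)
        (by rw [show c - 1 + 1 = c from by omega]; exact hmemμ' c le_rfl (by omega)) hi
      rwa [show c - 1 + 1 = c from by omega] at this
    -- then white i (c-1) would be marked, contradiction
    refine h0 (hM.white_mem _ trivial h0val
      ⟨V.black i (c - 1), hb2, V.black (i + 1) (c - 1), hb1, by simp, ?_, ?_⟩)
    · exact Or.inl (AdjAux.link h0val.1 hi (by omega))
    · exact Or.inl (AdjAux.vert hcm1 (by omega))
  · -- (b) the intermediate whites of row i+1 are marked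
    intro j h2 h3
    have hk1 : c + 1 ≤ c + j - 1 := by omega
    have hk2 : c + j - 1 ≤ c + r - 1 := by omega
    set k := c + j - 1 with hk
    refine ⟨⟨hdown' k (by omega) hk2, by omega⟩, ?_⟩
    refine hM.white_mem _ trivial ⟨hdown' k (by omega) hk2, by omega⟩
      ⟨V.black (i + 1) (k - 1), hblk_vert (k - 1) (by omega) (by omega),
       V.black (i + 1) k, hblk_vert k (by omega) hk2, by simp; omega, ?_, ?_⟩
    · refine Or.inr ?_
      have := AdjAux.horiz (μ := μ) (i := i + 1) (j := k - 1)
        (by rw [show k - 1 + 1 = k from by omega]; exact hdown' k (by omega) hk2)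
        (by omega)
      rwa [show k - 1 + 1 = k from by omega] at this
    · exact Or.inl (AdjAux.link (hdown' k (by omega) hk2) (by omega) (by omega))
  · -- (c) white (i+1) (c+r), if it exists, is not marked
    intro hmem hcontra
    have himem : (i, c + r) ∈ μ := μ.up_left_mem (by omega) le_rfl hmem
    have hb3 : V.black (i + 1) (c + r) ∈ M :=
      hM.black_mem _ hcontra trivial _ trivial ⟨hmem, by omega⟩
        (Or.inr (AdjAux.link hmem (by omega) (by omega)))
    have hb4 : V.black i (c + r - 1) ∈ M := hblk_link (c + r - 1) (by omega) le_rfl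
    have hw : V.white i (c + r) ∈ M := by
      refine hM.white_mem _ trivial ⟨himem, by omega⟩
        ⟨V.black i (c + r - 1), hb4, V.black (i + 1) (c + r), hb3, by simp, ?_, ?_⟩
      · refine Or.inr ?_
        have := AdjAux.horiz (μ := μ) (i := i) (j := c + r - 1)
          (by rw [show c + r - 1 + 1 = c + r from by omega]; exact himem) hi
        rwa [show c + r - 1 + 1 = c + r from by omega] at this
      · exact Or.inl (AdjAux.vert hmem (by omega))
    rcases hnext with h | h
    · exact h himem
    · exact h hw

end LeGraph
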